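/- arXiv:2507.21747 — 3 statements merged into one kernel-verified Lean document; each statement's English description precedes it below -/
import Mathlib

section
/- The map [N] ↦ [N + ½Ω] from Sp(Ω)-orbits of symmetric 2n×2n complex matrices to equivalence classes of matrices M with M − Mᵗ = Ω (under congruence M ↦ C M Cᵗ, C invertible) is well-defined and surjective. -/
open Matrix

/-- The standard skew-symmetric (symplectic) matrix `Ω = [[0, I], [-I, 0]]`. -/
def stdOmega (n : ℕ) : Matrix (Fin (2 * n)) (Fin (2 * n)) ℂ :=
  fun i j => if (i : ℕ) + n = (j : ℕ) then 1 else if (j : ℕ) + n = (i : ℕ) then -1 else 0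

lemma stdOmega_transpose (n : ℕ) : (stdOmega n)ᵀ = -(stdOmega n) := by
  ext i j
  simp only [stdOmega, Matrix.transpose_apply, Matrix.neg_apply]
  have hi := i.isLt
  have hj := j.isLt
  split_ifs with h1 h2 h2 <;> first | omega | norm_num

/-- Congruence relation on matrices `M` with `M - Mᵗ = Ω`. -/
def mRel (n : ℕ) (M₁ M₂ : {M : Matrix (Fin (2 * n)) (Fin (2 * n)) ℂ // M - Mᵀ = stdOmega n}) :
    Prop :=
  ∃ C : Matrix (Fin (2 * n)) (Fin (2 * n)) ℂ, IsUnit C ∧ M₁.1 = C * M₂.1 * Cᵀ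

/-- The `Sp(Ω)`-congruence relation on symmetric matrices. -/
def sRel (n : ℕ) (N₁ N₂ : {N : Matrix (Fin (2 * n)) (Fin (2 * n)) ℂ // Nᵀ = N}) : Prop :=
  ∃ C : Matrix (Fin (2 * n)) (Fin (2 * n)) ℂ,
    IsUnit C ∧ C * stdOmega n * Cᵀ = stdOmega n ∧ N₁.1 = C * N₂.1 * Cᵀ

/-- The map `[N] ↦ [N + ½Ω]`, from `Sp(Ω)`-orbits of symmetric
matrices to congruence classes of matrices `M` with `M - Mᵗ = Ω`, is
well-defined and surjective. -/
theorem add_half_omega_welldefined_surjective (n : ℕ) :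
    ∃ G : Quot (sRel n) → Quot (mRel n),
      (∀ N : {N : Matrix (Fin (2 * n)) (Fin (2 * n)) ℂ // Nᵀ = N},
        G (Quot.mk (sRel n) N) =
          Quot.mk (mRel n) ⟨N.1 + (1/2 : ℂ) • stdOmega n, by
            rw [Matrix.transpose_add, Matrix.transpose_smul, stdOmega_transpose, N.2]
            module⟩) ∧
      Function.Surjective G := by

  refine ⟨Quot.lift (fun N : {N : Matrix (Fin (2 * n)) (Fin (2 * n)) ℂ // Nᵀ = N} =>
      Quot.mk (mRel n) ⟨N.1 + (1/2 : ℂ) • stdOmega n, by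
        rw [Matrix.transpose_add, Matrix.transpose_smul, stdOmega_transpose, N.2]
        module⟩) ?_, fun N => rfl, ?_⟩
  · rintro N₁ N₂ ⟨C, hC, hΩ, hN⟩
    apply Quot.sound
    refine ⟨C, hC, ?_⟩
    simp only [hN, Matrix.mul_add, Matrix.add_mul, Matrix.mul_smul, Matrix.smul_mul, hΩ]
  · intro m
    induction m using Quot.ind with
    | _ M =>
      refine ⟨Quot.mk _ ⟨(1/2 : ℂ) • (M.1 + M.1ᵀ), by
        rw [Matrix.transpose_smul, Matrix.transpose_add, Matrix.transpose_transpose]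
        module⟩, ?_⟩
      obtain ⟨M, h⟩ := M
      apply congrArg (Quot.mk (mRel n))
      apply Subtype.ext
      show (1/2 : ℂ) • (M + Mᵀ) + (1/2 : ℂ) • stdOmega n = M
      rw [← h]
      module
end

section
/- Let the Lie algebra h₂ₙ₊₁ ⊂ Mat_{2n+2}(ℂ) be spanned by the elements of Example 1 (parameter k), and let A_k be the unital associative subalgebra of Mat_{2n+2}(ℂ) generated by it. Then dim_ℂ A_k = 2n+2+k. In particular the algebras A_k for distinct k ∈ {0,…,n} are pairwise non-isomorphic. -/
open Matrix

/-- The matrix unit `E_{a,b}` of `Mat_{2n+2}(ℂ)` in 1-based indexing. -/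
def Emat (n a b : ℕ) : Matrix (Fin (2 * n + 2)) (Fin (2 * n + 2)) ℂ :=
  fun p q => if (p : ℕ) + 1 = a ∧ (q : ℕ) + 1 = b then 1 else 0

/-- `X_i = E_{1,i+1} + E_{i+1,n+i+1}` for `1 ≤ i ≤ k`, `X_j = E_{1,j+1}` for `k < j ≤ n`. -/
def exX (n k i : ℕ) : Matrix (Fin (2 * n + 2)) (Fin (2 * n + 2)) ℂ :=
  if i ≤ k then Emat n 1 (i + 1) + Emat n (i + 1) (n + i + 1) else Emat n 1 (i + 1)

/-- `Y_i = E_{1,n+i+1} + E_{n-i+2,2n+2}` for `1 ≤ i ≤ n`. -/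
def exY (n i : ℕ) : Matrix (Fin (2 * n + 2)) (Fin (2 * n + 2)) ℂ :=
  Emat n 1 (n + i + 1) + Emat n (n - i + 2) (2 * n + 2)

/-- `t = E_{1,2n+2}`. -/
def exT (n : ℕ) : Matrix (Fin (2 * n + 2)) (Fin (2 * n + 2)) ℂ :=
  Emat n 1 (2 * n + 2)

/-- `A_k`: the unital associative subalgebra of `Mat_{2n+2}(ℂ)` generated by the
elements of Example 1 with parameter `k`. -/
def exAlg (n k : ℕ) : Subalgebra ℂ (Matrix (Fin (2 * n + 2)) (Fin (2 * n + 2)) ℂ) :=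
  Algebra.adjoin ℂ ({exT n} ∪ (exX n k '' Set.Icc 1 n) ∪ (exY n '' Set.Icc 1 n))

lemma Emat_mul (n a b c d : ℕ) :
    Emat n a b * Emat n c d =
      if b = c ∧ 1 ≤ b ∧ b ≤ 2*n+2 then Emat n a d else 0 := by
  ext p q
  simp only [Matrix.mul_apply, Emat]
  split_ifs with h
  · obtain ⟨rfl, h1, h2⟩ := h
    rw [Finset.sum_eq_single (⟨b-1, by omega⟩ : Fin (2*n+2))]
    · simp only [Fin.val_mk]
      have hb' : b - 1 + 1 = b := by omega
      rw [hb']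
      by_cases hp : (p : ℕ) + 1 = a <;> by_cases hq : (q : ℕ) + 1 = d <;>
        simp [Emat, hp, hq]
    · intro r _ hr
      have : (r : ℕ) + 1 ≠ b := by
        intro hh; apply hr; apply Fin.ext; simp; omega
      simp [this]
    · simp
  · apply Finset.sum_eq_zero
    intro r _
    by_cases hb : (r : ℕ) + 1 = b
    · have : ¬ ((r:ℕ)+1 = c) := by omega
      simp [this]
    · simp [hb]

lemma mulXX (n k a b : ℕ) (ha1 : 1 ≤ a) (ha : a ≤ n) (hb : b ≤ n) :
    exX n k a * exX n k b = if a = b ∧ a ≤ k then Emat n 1 (n + a + 1) else 0 := by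
  by_cases hak : a ≤ k <;> by_cases hbk : b ≤ k <;>
    simp only [exX, hak, hbk, and_true, and_false, if_true, if_false] <;>
    simp only [add_mul, mul_add, Emat_mul] <;>
    split_ifs
  all_goals try (exfalso; omega)
  all_goals try (have hab : a = b := (by omega); subst hab)
  all_goals first | rfl | simp

lemma mulXY (n k a b : ℕ) (ha1 : 1 ≤ a) (ha : a ≤ n) (hb1 : 1 ≤ b) (hb : b ≤ n) :
    exX n k a * exY n b = if a + b = n + 1 then exT n else 0 := by
  by_cases hak : a ≤ k <;>
    simp only [exX, exY, exT, hak, if_true, if_false] <;>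
    simp only [add_mul, mul_add, Emat_mul] <;>
    split_ifs <;>
    first
      | (exfalso; omega)
      | simp

lemma mulYX (n k a b : ℕ) (ha1 : 1 ≤ a) (hb : b ≤ n) :
    exY n a * exX n k b = 0 := by
  by_cases hbk : b ≤ k <;>
    simp only [exX, exY, hbk, if_true, if_false] <;>
    simp only [add_mul, mul_add, Emat_mul] <;>
    split_ifs <;>
    first
      | (exfalso; omega)
      | simp

lemma mulYY (n a b : ℕ) (hn : 1 ≤ n) (ha1 : 1 ≤ a) (hb1 : 1 ≤ b) :
    exY n a * exY n b = 0 := by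
  simp only [exY, add_mul, mul_add, Emat_mul]
  split_ifs <;> first | (exfalso; omega) | simp

lemma mulWX (n k c b : ℕ) (hb : b ≤ n) (hc : n + 2 ≤ c) :
    Emat n 1 c * exX n k b = 0 := by
  by_cases hbk : b ≤ k <;>
    simp only [exX, hbk, if_true, if_false] <;>
    simp only [mul_add, Emat_mul] <;>
    split_ifs <;> first | (exfalso; omega) | simp

lemma mulWY (n c b : ℕ) (hb1 : 1 ≤ b) (hb : b ≤ n) (hc : n + 2 ≤ c) :
    Emat n 1 c * exY n b = 0 := by
  simp only [exY, mul_add, Emat_mul]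
  split_ifs <;> first | (exfalso; omega) | simp

lemma mulXW (n k a c : ℕ) (ha1 : 1 ≤ a) :
    exX n k a * Emat n 1 c = 0 := by
  by_cases hak : a ≤ k <;>
    simp only [exX, hak, if_true, if_false] <;>
    simp only [add_mul, Emat_mul] <;>
    split_ifs <;> first | (exfalso; omega) | simp

lemma mulYW (n a c : ℕ) (hn : 1 ≤ n) :
    exY n a * Emat n 1 c = 0 := by
  simp only [exY, add_mul, Emat_mul]
  split_ifs <;> first | (exfalso; omega) | simp

lemma mulWW (n c d : 
ℕ) (hc : 2 ≤ c) :
    Emat n 1 c * Emat n 1 d = 0 := by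
  rw [Emat_mul, if_neg (by omega)]

abbrev exIdx (n k : ℕ) := Unit ⊕ (Fin n ⊕ (Fin n ⊕ (Unit ⊕ Fin k)))

noncomputable def exV (n k : ℕ) : exIdx n k → Matrix (Fin (2 * n + 2)) (Fin (2 * n + 2)) ℂ
  | Sum.inl _ => 1
  | Sum.inr (Sum.inl i) => exX n k ((i : ℕ) + 1)
  | Sum.inr (Sum.inr (Sum.inl i)) => exY n ((i : ℕ) + 1)
  | Sum.inr (Sum.inr (Sum.inr (Sum.inl _))) => exT n
  | Sum.inr (Sum.inr (Sum.inr (Sum.inr i))) => Emat n 1 (n + (i : ℕ) + 2)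

noncomputable def exS (n k : ℕ) : Submodule ℂ (Matrix (Fin (2 * n + 2)) (Fin (2 * n + 2)) ℂ) :=
  Submodule.span ℂ (Set.range (exV n k))

lemma exS_mul (n k : ℕ) (hn : 1 ≤ n) (hk : k ≤ n) :
    ∀ i j : exIdx n k, exV n k i * exV n k j ∈ exS n k := by
  have hmem : ∀ i, exV n k i ∈ exS n k := fun i => Submodule.subset_span ⟨i, rfl⟩
  have hT : exT n = Emat n 1 (2 * n + 2) := rfl
  rintro (⟨⟩ | i | i | ⟨⟩ | i) j
  · rw [show exV n k (Sum.inl ()) = 1 from rfl, one_mul]; exact hmem j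
  · -- X_(i+1) * _
    rcases j with ⟨⟩ | j | j | ⟨⟩ | j
    · rw [show exV n k (Sum.inl ()) = 1 from rfl, mul_one]; exact hmem _
    · show exX n k (↑i + 1) * exX n k (↑j + 1) ∈ _
      rw [mulXX n k _ _ (by omega) (by omega) (by omega)]
      split_ifs with hc
      · obtain ⟨hij, hik⟩ := hc
        rw [show n + (↑i + 1) + 1 = n + (↑i : ℕ) + 2 by omega]
        exact hmem (Sum.inr (Sum.inr (Sum.inr (Sum.inr ⟨(i : ℕ), by omega⟩))))
      · exact zero_mem _
    · show exX n k (↑i + 1) * exY n (↑j + 1) ∈ _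
      rw [mulXY n k _ _ (by omega) (by omega) (by omega) (by omega)]
      split_ifs with hc
      · exact hmem (Sum.inr (Sum.inr (Sum.inr (Sum.inl ()))))
      · exact zero_mem _
    · show exX n k (↑i + 1) * exT n ∈ _
      rw [hT, mulXW n k _ _ (by omega)]; exact zero_mem _
    · show exX n k (↑i + 1) * Emat n 1 (n + ↑j + 2) ∈ _
      rw [mulXW n k _ _ (by omega)]; exact zero_mem _
  · -- Y_(i+1) * _
    rcases j with ⟨⟩ | j | j | ⟨⟩ | j
    · rw [show exV n k (Sum.inl ()) = 1 from rfl, mul_one]; exact hmem _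
    · show exY n (↑i + 1) * exX n k (↑j + 1) ∈ _
      rw [mulYX n k _ _ (by omega) (by omega)]; exact zero_mem _
    · show exY n (↑i + 1) * exY n (↑j + 1) ∈ _
      rw [mulYY n _ _ hn (by omega) (by omega)]; exact zero_mem _
    · show exY n (↑i + 1) * exT n ∈ _
      rw [hT, mulYW n _ _ hn]; exact zero_mem _
    · show exY n (↑i + 1) * Emat n 1 (n + ↑j + 2) ∈ _
      rw [mulYW n _ _ hn]; exact zero_mem _
  · -- t * _
    rcases j with ⟨⟩ | j | j | ⟨⟩ | j
    · rw [show exV n k (Sum.inl ()) = 1 from rfl, mul_one]; exact hmem _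
    · show exT n * exX n k (↑j + 1) ∈ _
      rw [hT, mulWX n k _ _ (by omega) (by omega)]; exact zero_mem _
    · show exT n * exY n (↑j + 1) ∈ _
      rw [hT, mulWY n _ _ (by omega) (by omega) (by omega)]; exact zero_mem _
    · show exT n * exT n ∈ _
      rw [hT, mulWW n _ _ (by omega)]; exact zero_mem _
    · show exT n * Emat n 1 (n + ↑j + 2) ∈ _
      rw [hT, mulWW n _ _ (by omega)]; exact zero_mem _
  · -- Z_i * _
    rcases j with ⟨⟩ | j | j | ⟨⟩ | j
    · rw [show exV n k (Sum.inl ()) = 1 from rfl, mul_one]; exact hmem _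
    · show Emat n 1 (n + ↑i + 2) * exX n k (↑j + 1) ∈ _
      rw [mulWX n k _ _ (by omega) (by omega)]; exact zero_mem _
    · show Emat n 1 (n + ↑i + 2) * exY n (↑j + 1) ∈ _
      rw [mulWY n _ _ (by omega) (by omega) (by omega)]; exact zero_mem _
    · show Emat n 1 (n + ↑i + 2) * exT n ∈ _
      rw [hT, mulWW n _ _ (by omega)]; exact zero_mem _
    · show Emat n 1 (n + ↑i + 2) * Emat n 1 (n + ↑j + 2) ∈ _
      rw [mulWW n _ _ (by omega)]; exact zero_mem _

lemma exS_one (n k : ℕ) : (1 : Matrix (Fin (2*n+2)) (Fin (2*n+2)) ℂ) ∈ exS n k :=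
  Submodule.subset_span ⟨Sum.inl (), rfl⟩

lemma exS_toSubmodule (n k : ℕ) (hn : 1 ≤ n) (hk : k ≤ n) :
    Subalgebra.toSubmodule (exAlg n k) = exS n k := by
  have hmulmem : ∀ x y, x ∈ exS n k → y ∈ exS n k → x * y ∈ exS n k := by
    intro x y hx hy
    have h1 := Submodule.mul_mem_mul (M := exS n k) (N := exS n k) hx hy
    rw [exS, Submodule.span_mul_span] at h1
    refine Submodule.span_le.mpr ?_ h1
    rintro z ⟨u, ⟨iu, rfl⟩, w, ⟨iw, rfl⟩, rfl⟩
    exact exS_mul n k hn hk iu iw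
  apply le_antisymm
  · have hle : exAlg n k ≤ ((exS n k).toSubalgebra (exS_one n k) hmulmem) := by
      apply Algebra.adjoin_le
      rintro x ((hx | ⟨i, ⟨hi1, hi2⟩, rfl⟩) | ⟨i, ⟨hi1, hi2⟩, rfl⟩)
      · rcases hx with rfl
        exact Submodule.subset_span ⟨Sum.inr (Sum.inr (Sum.inr (Sum.inl ()))), rfl⟩
      · have : exV n k (Sum.inr (Sum.inl ⟨i - 1, show i - 1 < n by omega⟩)) = exX n k i := by
          show exX n k ((i-1)+1) = exX n k i
          rw [show i - 1 + 1 = i from by omega]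
        exact Submodule.subset_span ⟨_, this⟩
      · have : exV n k (Sum.inr (Sum.inr (Sum.inl ⟨i - 1, show i - 1 < n by omega⟩))) = exY n i := by
          show exY n ((i-1)+1) = exY n i
          rw [show i - 1 + 1 = i from by omega]
        exact Submodule.subset_span ⟨_, this⟩
    intro x hx
    exact hle hx
  · rw [exS]
    apply Submodule.span_le.mpr
    rintro x ⟨i, rfl⟩
    rcases i with ⟨⟩ | i | i | ⟨⟩ | i
    · exact one_mem (exAlg n k)
    · exact Algebra.subset_adjoin (Or.inl (Or.inr ⟨(i:ℕ)+1, ⟨by omega, by have := i.isLt; omega⟩, rfl⟩))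
    · exact Algebra.subset_adjoin (Or.inr ⟨(i:ℕ)+1, ⟨by omega, by have := i.isLt; omega⟩, rfl⟩)
    · exact Algebra.subset_adjoin (Or.inl (Or.inl rfl))
    · -- Z_i = X_(i+1) * X_(i+1)
      have hX : exX n k ((i:ℕ)+1) ∈ exAlg n k :=
        Algebra.subset_adjoin (Or.inl (Or.inr ⟨(i:ℕ)+1, ⟨by omega, by have := i.isLt; omega⟩, rfl⟩))
      have hprod := mulXX n k ((i:ℕ)+1) ((i:ℕ)+1) (by omega) (by omega) (by omega)
      rw [if_pos ⟨rfl, by omega⟩] at hprod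
      show Emat n 1 (n + (i:ℕ) + 2) ∈ exAlg n k
      rw [show n + (i:ℕ) + 2 = n + ((i:ℕ)+1) + 1 by omega, ← hprod]
      exact mul_mem hX hX

lemma Emat_apply (n a b : ℕ) (p q : Fin (2*n+2)) :
    Emat n a b p q = if (p:ℕ)+1 = a ∧ (q:ℕ)+1 = b then 1 else 0 := rfl

lemma exT_apply (n : ℕ) (p q : Fin (2*n+2)) :
    exT n p q = if (p:ℕ)+1 = 1 ∧ (q:ℕ)+1 = 2*n+2 then 1 else 0 := rfl

lemma exX_apply (n k i : ℕ) (p q : Fin (2*n+2)) :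
    exX n k i p q = (if (p:ℕ) + 1 = 1 ∧ (q:ℕ) + 1 = i + 1 then 1 else 0) +
      (if i ≤ k ∧ (p:ℕ) + 1 = i + 1 ∧ (q:ℕ) + 1 = n + i + 1 then 1 else 0) := by
  by_cases h : i ≤ k <;> simp [exX, Emat, h, Matrix.add_apply]

lemma exY_apply (n i : ℕ) (p q : Fin (2*n+2)) :
    exY n i p q = (if (p:ℕ) + 1 = 1 ∧ (q:ℕ) + 1 = n + i + 1 then 1 else 0) +
      (if (p:ℕ) + 1 = n - i + 2 ∧ (q:ℕ) + 1 = 2*n+2 then 1 else 0) := by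
  simp [exY, Emat, Matrix.add_apply]

lemma key_blocks (n k : ℕ) (g : exIdx n k → ℂ) (p q : Fin (2*n+2)) :
    ∑ i : exIdx n k, g i * exV n k i p q
      = g (Sum.inl ()) * (1 : Matrix (Fin (2*n+2)) (Fin (2*n+2)) ℂ) p q
        + (∑ c : Fin n, g (Sum.inr (Sum.inl c)) * exX n k ((c:ℕ)+1) p q)
        + (∑ c : Fin n, g (Sum.inr (Sum.inr (Sum.inl c))) * exY n ((c:ℕ)+1) p q)
        + g (Sum.inr (Sum.inr (Sum.inr (Sum.inl ())))) * exT n p q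
        + (∑ c : Fin k, g (Sum.inr (Sum.inr (Sum.inr (Sum.inr c)))) * Emat n 1 (n+(c:ℕ)+2) p q) := by
  simp only [Fintype.sum_sum_type, Finset.univ_unique, Finset.sum_singleton, exV]
  ring

lemma exV_li (n k : ℕ) (hn : 1 ≤ n) (hk : k ≤ n) : LinearIndependent ℂ (exV n k) := by
  rw [Fintype.linearIndependent_iff]
  intro g hg
  have key : ∀ p q : Fin (2*n+2), ∑ i : exIdx n k, g i * exV n k i p q = 0 := by
    intro p q
    have h := Matrix.ext_iff.mpr hg p q
    simpa [Matrix.sum_apply, Matrix.smul_apply, smul_eq_mul] using h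
  -- X coefficients
  have hX : ∀ a0 : Fin n, g (Sum.inr (Sum.inl a0)) = 0 := by
    intro a0
    have ha0 := a0.isLt
    set p : Fin (2*n+2) := ⟨0, by omega⟩ with hpdef
    set q : Fin (2*n+2) := ⟨(a0:ℕ)+1, by omega⟩ with hqdef
    have hpv : (p:ℕ) = 0 := rfl
    have hqv : (q:ℕ) = (a0:ℕ)+1 := rfl
    have h := key p q
    rw [key_blocks] at h
    have hOne : (1 : Matrix (Fin (2*n+2)) (Fin (2*n+2)) ℂ) p q = 0 := by
      rw [Matrix.one_apply, if_neg]; intro hc; rw [Fin.ext_iff] at hc; omega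
    have hXs : (∑ c : Fin n, g (Sum.inr (Sum.inl c)) * exX n k ((c:ℕ)+1) p q)
        = g (Sum.inr (Sum.inl a0)) := by
      rw [Finset.sum_eq_single a0]
      · rw [exX_apply, if_pos ⟨by omega, by omega⟩, if_neg (by rintro ⟨h1,h2,h3⟩; omega)]; ring
      · intro c _ hc
        have hc' : (c:ℕ) ≠ (a0:ℕ) := fun hh => hc (Fin.ext hh)
        have hcl := c.isLt
        rw [exX_apply, if_neg (by rintro ⟨h1,h2⟩; omega),
          if_neg (by rintro ⟨h1,h2,h3⟩; omega)]; ring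
      · intro hcon; exact absurd (Finset.mem_univ _) hcon
    have hYs : (∑ c : Fin n, g (Sum.inr (Sum.inr (Sum.inl c))) * exY n ((c:ℕ)+1) p q) = 0 :=
      Finset.sum_eq_zero fun c _ => by
        have hcl := c.isLt
        rw [exY_apply, if_neg (by rintro ⟨h1,h2⟩; omega),
          if_neg (by rintro ⟨h1,h2⟩; omega)]; ring
    have hTs : exT n p q = 0 := by
      rw [exT_apply, if_neg (by rintro ⟨h1,h2⟩; omega)]
    have hZs : (∑ c : Fin k, g (Sum.inr (Sum.inr (Sum.inr (Sum.inr c)))) * Emat n 1 (n+(c:ℕ)+2) p q) = 0 :=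
      Finset.sum_eq_zero fun c _ => by
        have hcl := c.isLt
        rw [Emat_apply, if_neg (by rintro ⟨h1,h2⟩; omega)]; ring
    rw [hOne, hXs, hYs, hTs, hZs] at h
    simpa using h
  -- Y coefficients
  have hY : ∀ a0 : Fin n, g (Sum.inr (Sum.inr (Sum.inl a0))) = 0 := by
    intro a0
    have ha0 := a0.isLt
    set p : Fin (2*n+2) := ⟨n - (a0:ℕ), by omega⟩ with hpdef
    set q : Fin (2*n+2) := ⟨2*n+1, by omega⟩ with hqdef
    have hpv : (p:ℕ) = n - (a0:ℕ) := rfl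
    have hqv : (q:ℕ) = 2*n+1 := rfl
    have h := key p q
    rw [key_blocks] at h
    have hOne : (1 : Matrix (Fin (2*n+2)) (Fin (2*n+2)) ℂ) p q = 0 := by
      rw [Matrix.one_apply, if_neg]; intro hc; rw [Fin.ext_iff] at hc; omega
    have hXs : (∑ c : Fin n, g (Sum.inr (Sum.inl c)) * exX n k ((c:ℕ)+1) p q) = 0 :=
      Finset.sum_eq_zero fun c _ => by
        have hcl := c.isLt
        rw [exX_apply, if_neg (by rintro ⟨h1,h2⟩; omega),
          if_neg (by rintro ⟨h1,h2,h3⟩; omega)]; ring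
    have hYs : (∑ c : Fin n, g (Sum.inr (Sum.inr (Sum.inl c))) * exY n ((c:ℕ)+1) p q)
        = g (Sum.inr (Sum.inr (Sum.inl a0))) := by
      rw [Finset.sum_eq_single a0]
      · rw [exY_apply, if_neg (by rintro ⟨h1,h2⟩; omega), if_pos ⟨by omega, by omega⟩]; ring
      · intro c _ hc
        have hc' : (c:ℕ) ≠ (a0:ℕ) := fun hh => hc (Fin.ext hh)
        have hcl := c.isLt
        rw [exY_apply, if_neg (by rintro ⟨h1,h2⟩; omega),
          if_neg (by rintro ⟨h1,h2⟩; omega)]; ring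
      · intro hcon; exact absurd (Finset.mem_univ _) hcon
    have hTs : exT n p q = 0 := by
      rw [exT_apply, if_neg (by rintro ⟨h1,h2⟩; omega)]
    have hZs : (∑ c : Fin k, g (Sum.inr (Sum.inr (Sum.inr (Sum.inr c)))) * Emat n 1 (n+(c:ℕ)+2) p q) = 0 :=
      Finset.sum_eq_zero fun c _ => by
        have hcl := c.isLt
        rw [Emat_apply, if_neg (by rintro ⟨h1,h2⟩; omega)]; ring
    rw [hOne, hXs, hYs, hTs, hZs] at h
    simpa using h
  -- t coefficient
  have hT : g (Sum.inr (Sum.inr (Sum.inr (Sum.inl ())))) = 0 := by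
    set p : Fin (2*n+2) := ⟨0, by omega⟩ with hpdef
    set q : Fin (2*n+2) := ⟨2*n+1, by omega⟩ with hqdef
    have hpv : (p:ℕ) = 0 := rfl
    have hqv : (q:ℕ) = 2*n+1 := rfl
    have h := key p q
    rw [key_blocks] at h
    have hOne : (1 : Matrix (Fin (2*n+2)) (Fin (2*n+2)) ℂ) p q = 0 := by
      rw [Matrix.one_apply, if_neg]; intro hc; rw [Fin.ext_iff] at hc; omega
    have hXs : (∑ c : Fin n, g (Sum.inr (Sum.inl c)) * exX n k ((c:ℕ)+1) p q) = 0 :=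
      Finset.sum_eq_zero fun c _ => by
        have hcl := c.isLt
        rw [exX_apply, if_neg (by rintro ⟨h1,h2⟩; omega),
          if_neg (by rintro ⟨h1,h2,h3⟩; omega)]; ring
    have hYs : (∑ c : Fin n, g (Sum.inr (Sum.inr (Sum.inl c))) * exY n ((c:ℕ)+1) p q) = 0 :=
      Finset.sum_eq_zero fun c _ => by
        have hcl := c.isLt
        rw [exY_apply, if_neg (by rintro ⟨h1,h2⟩; omega),
          if_neg (by rintro ⟨h1,h2⟩; omega)]; ring
    have hTs : exT n p q = 1 := by
      rw [exT_apply, if_pos ⟨by omega, by omega⟩]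
    have hZs : (∑ c : Fin k, g (Sum.inr (Sum.inr (Sum.inr (Sum.inr c)))) * Emat n 1 (n+(c:ℕ)+2) p q) = 0 :=
      Finset.sum_eq_zero fun c _ => by
        have hcl := c.isLt
        rw [Emat_apply, if_neg (by rintro ⟨h1,h2⟩; omega)]; ring
    rw [hOne, hXs, hYs, hTs, hZs] at h
    simpa using h
  -- identity coefficient
  have hI : g (Sum.inl ()) = 0 := by
    set p : Fin (2*n+2) := ⟨2*n+1, by omega⟩ with hpdef
    have hpv : (p:ℕ) = 2*n+1 := rfl
    have h := key p p
    rw [key_blocks] at h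
    have hOne : (1 : Matrix (Fin (2*n+2)) (Fin (2*n+2)) ℂ) p p = 1 := Matrix.one_apply_eq p
    have hXs : (∑ c : Fin n, g (Sum.inr (Sum.inl c)) * exX n k ((c:ℕ)+1) p p) = 0 :=
      Finset.sum_eq_zero fun c _ => by rw [hX c]; ring
    have hYs : (∑ c : Fin n, g (Sum.inr (Sum.inr (Sum.inl c))) * exY n ((c:ℕ)+1) p p) = 0 :=
      Finset.sum_eq_zero fun c _ => by rw [hY c]; ring
    have hTs : exT n p p = 0 := by
      rw [exT_apply, if_neg (by rintro ⟨h1,h2⟩; omega)]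
    have hZs : (∑ c : Fin k, g (Sum.inr (Sum.inr (Sum.inr (Sum.inr c)))) * Emat n 1 (n+(c:ℕ)+2) p p) = 0 :=
      Finset.sum_eq_zero fun c _ => by
        have hcl := c.isLt
        rw [Emat_apply, if_neg (by rintro ⟨h1,h2⟩; omega)]; ring
    rw [hOne, hXs, hYs, hTs, hZs] at h
    simpa using h
  -- Z coefficients
  have hZ : ∀ a0 : Fin k, g (Sum.inr (Sum.inr (Sum.inr (Sum.inr a0)))) = 0 := by
    intro a0
    have ha0 := a0.isLt
    set p : Fin (2*n+2) := ⟨0, by omega⟩ with hpdef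
    set q : Fin (2*n+2) := ⟨n+(a0:ℕ)+1, by omega⟩ with hqdef
    have hpv : (p:ℕ) = 0 := rfl
    have hqv : (q:ℕ) = n+(a0:ℕ)+1 := rfl
    have h := key p q
    rw [key_blocks] at h
    have hOne : (1 : Matrix (Fin (2*n+2)) (Fin (2*n+2)) ℂ) p q = 0 := by
      rw [Matrix.one_apply, if_neg]; intro hc; rw [Fin.ext_iff] at hc; omega
    have hXs : (∑ c : Fin n, g (Sum.inr (Sum.inl c)) * exX n k ((c:ℕ)+1) p q) = 0 :=
      Finset.sum_eq_zero fun c _ => by rw [hX c]; ring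
    have hYs : (∑ c : Fin n, g (Sum.inr (Sum.inr (Sum.inl c))) * exY n ((c:ℕ)+1) p q) = 0 :=
      Finset.sum_eq_zero fun c _ => by rw [hY c]; ring
    have hTs : exT n p q = 0 := by
      rw [exT_apply, if_neg (by rintro ⟨h1,h2⟩; omega)]
    have hZs : (∑ c : Fin k, g (Sum.inr (Sum.inr (Sum.inr (Sum.inr c)))) * Emat n 1 (n+(c:ℕ)+2) p q)
        = g (Sum.inr (Sum.inr (Sum.inr (Sum.inr a0)))) := by
      rw [Finset.sum_eq_single a0]
      · rw [Emat_apply, if_pos ⟨by omega, by omega⟩]; ring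
      · intro c _ hc
        have hc' : (c:ℕ) ≠ (a0:ℕ) := fun hh => hc (Fin.ext hh)
        have hcl := c.isLt
        rw [Emat_apply, if_neg (by rintro ⟨h1,h2⟩; omega)]; ring
      · intro hcon; exact absurd (Finset.mem_univ _) hcon
    rw [hOne, hXs, hYs, hTs, hZs] at h
    simpa using h
  rintro (⟨⟩ | c | c | ⟨⟩ | c)
  · exact hI
  · exact hX c
  · exact hY c
  · exact hT
  · exact hZ c

lemma exAlg_finrank (n k : ℕ) (hn : 1 ≤ n) (hk : k ≤ n) :
    Module.finrank ℂ ↥(exAlg n k) = 2*n+2+k := by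
  have h1 : Module.finrank ℂ ↥(Subalgebra.toSubmodule (exAlg n k))
      = Module.finrank ℂ ↥(exAlg n k) := rfl
  rw [← h1, exS_toSubmodule n k hn hk, exS, finrank_span_eq_card (exV_li n k hn hk)]
  simp only [Fintype.card_sum, Fintype.card_fin, Fintype.card_unit]
  omega

/-- The algebra `A_k` generated by the Heisenberg Lie algebra of
Example 1 has dimension `2n+2+k`; in particular, for distinct `k ∈ {0,…,n}` the
algebras `A_k` are pairwise non-isomorphic. -/
theorem exAlg_dim_and_noniso (n : ℕ) (hn : 1 ≤ n) :
    (∀ k ≤ n, Module.finrank ℂ ↥(exAlg n k) = 2 * n + 2 + k) ∧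
    (∀ k₁ ≤ n, ∀ k₂ ≤ n, k₁ ≠ k₂ → IsEmpty (↥(exAlg n k₁) ≃ₐ[ℂ] ↥(exAlg n k₂))) := by
  constructor
  · intro k hk; exact exAlg_finrank n k hn hk
  · intro k1 hk1 k2 hk2 hne
    constructor
    intro e
    have h := e.toLinearEquiv.finrank_eq
    rw [exAlg_finrank n k1 hn hk1, exAlg_finrank n k2 hn hk2] at h
    omega
end

section
/- Up to isomorphism, there are infinitely many tautological algebras of dimension 2n+2 for every n ≥ 1: the assignment of the structure matrix gives, via the bijection [M] ↦ [½(M+Mᵗ)] with Sp(Ω)-orbits on symmetric matrices, infinitely many isomorphism classes. -/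
open Matrix

/-- `t = E_{1,2n+2}` (in 1-based indexing) in `Mat_{2n+2}(ℂ)`. -/
def tmat (n : ℕ) : Matrix (Fin (2 * n + 2)) (Fin (2 * n + 2)) ℂ :=
  Matrix.single ⟨0, by omega⟩ ⟨2 * n + 1, by omega⟩ 1

/-- `X_i = E_{1,i+1} + Σ_l a_{li} E_{l+1,2n+2}` (1-based indexing). -/
noncomputable def Xmat (n : ℕ) (M : Matrix (Fin (2 * n)) (Fin (2 * n)) ℂ) (i : Fin (2 * n)) :
    Matrix (Fin (2 * n + 2)) (Fin (2 * n + 2)) ℂ :=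
  Matrix.single ⟨0, by omega⟩ ⟨(i : ℕ) + 1, by have := i.isLt; omega⟩ 1 +
    ∑ l : Fin (2 * n), M l i •
      Matrix.single ⟨(l : ℕ) + 1, by have := l.isLt; omega⟩ ⟨2 * n + 1, by omega⟩ 1

/-- The tautological algebra associated to a structure matrix `M`. -/
noncomputable def tautAlg (n : ℕ) (M : Matrix (Fin (2 * n)) (Fin (2 * n)) ℂ) :
    Subalgebra ℂ (Matrix (Fin (2 * n + 2)) (Fin (2 * n + 2)) ℂ) :=
  Algebra.adjoin ℂ (insert (tmat n) (Set.range (Xmat n M)))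

/-!
An algebra isomorphism `φ : A(M₁) ≃ A(M₂)` sends each generator `X_p` to a nilpotent element,
which therefore has no scalar part; on such elements the product is `x * y = (cₓ ⬝ M₂ c_y) t`,
where `cₓ` are the coordinates along the `X_i`. As `t` is a commutator of two generators, `φ t`
is a nonzero multiple `μ t`, and comparing `φ (X_p X_q) = M₁ p q • φ t` gives `C M₂ Cᵀ = μ M₁`
for the coordinate matrix `C`. Subtracting the transpose yields `C Ω Cᵀ = μ Ω`, hence
`det C ^ 2 = μ ^ (2n)` and `det M₁ = det M₂`. The structure matrices `[[I, I], [0, I]]` with the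
first diagonal entry replaced by `j` have determinant `j`, so they give pairwise non-isomorphic
algebras.
-/

theorem Matrix.det_eq_of_mul_mul_transpose_eq_smul {ι K : Type*} [Fintype ι] [DecidableEq ι]
    [Field K] {M₁ M₂ S C : Matrix ι ι K} {μ : K} (hμ : μ ≠ 0) (hS : S.det ≠ 0)
    (h₁ : M₁ - M₁ᵀ = S) (h₂ : M₂ - M₂ᵀ = S) (hC : C * M₂ * Cᵀ = μ • M₁) : M₁.det = M₂.det := by
  have hCt : C * M₂ᵀ * Cᵀ = μ • M₁ᵀ := by
    rw [← transpose_smul, ← hC, transpose_mul, transpose_mul, transpose_transpose, Matrix.mul_assoc]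
  have hCS : C * S * Cᵀ = μ • S := by
    rw [← h₂, Matrix.mul_sub, Matrix.sub_mul, hC, hCt, ← smul_sub, h₁, h₂]
  have hdetC : C.det ^ 2 = μ ^ Fintype.card ι := by
    have h := congrArg det hCS
    rw [det_mul, det_mul, det_transpose, det_smul] at h
    exact mul_right_cancel₀ hS (by linear_combination h)
  have h := congrArg det hC
  rw [det_mul, det_mul, det_transpose, det_smul] at h
  exact mul_left_cancel₀ (pow_ne_zero _ hμ) (by linear_combination -h + M₂.det * hdetC)

lemma stdOmega_mul_self (n : ℕ) : stdOmega n * stdOmega n = -1 := by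
  ext i k
  simp only [mul_apply, stdOmega, Matrix.neg_apply, Matrix.one_apply, Fin.ext_iff]
  rw [Finset.sum_eq_single ⟨if (i : ℕ) < n then i + n else i - n, by split_ifs <;> omega⟩]
  · split_ifs <;> dsimp only <;> split_ifs <;> first | omega | simp
  · intro j _ hj
    simp only [ne_eq, Fin.ext_iff] at hj
    split_ifs at hj ⊢ <;> first | omega | simp
  · simp

lemma det_stdOmega_ne_zero (n : ℕ) : (stdOmega n).det ≠ 0 := by
  have h := congrArg det (stdOmega_mul_self n)
  rw [det_mul, det_neg, det_one, Fintype.card_fin, pow_mul, neg_one_sq, one_pow, mul_one] at h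
  exact left_ne_zero_of_mul_eq_one h

lemma stdOmega_ne_zero {n : ℕ} (hn : 0 < n) : stdOmega n ≠ 0 := fun h => by
  simpa [stdOmega] using congrFun (congrFun h ⟨0, by omega⟩) ⟨n, by omega⟩

namespace TautologicalAlgebra

def firstIdx (n : ℕ) : Fin (2 * n + 2) := ⟨0, by omega⟩

def lastIdx (n : ℕ) : Fin (2 * n + 2) := ⟨2 * n + 1, by omega⟩

def innerIdx {n : ℕ} (i : Fin (2 * n)) : Fin (2 * n + 2) := ⟨i + 1, by omega⟩

variable {n : ℕ} {M : Matrix (Fin (2 * n)) (Fin (2 * n)) ℂ}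

@[simp] lemma firstIdx_ne_lastIdx : firstIdx n ≠ lastIdx n := by
  simp [firstIdx, lastIdx, Fin.ext_iff]

@[simp] lemma lastIdx_ne_firstIdx : lastIdx n ≠ firstIdx n := firstIdx_ne_lastIdx.symm

@[simp] lemma firstIdx_ne_innerIdx (i : Fin (2 * n)) : firstIdx n ≠ innerIdx i := by
  simp [firstIdx, innerIdx, Fin.ext_iff]

@[simp] lemma innerIdx_ne_firstIdx (i : Fin (2 * n)) : innerIdx i ≠ firstIdx n :=
  (firstIdx_ne_innerIdx i).symm

@[simp] lemma innerIdx_ne_lastIdx (i : Fin (2 * n)) : innerIdx i ≠ lastIdx n := by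
  simp only [innerIdx, lastIdx, ne_eq, Fin.ext_iff]
  omega

@[simp] lemma lastIdx_ne_innerIdx (i : Fin (2 * n)) : lastIdx n ≠ innerIdx i :=
  (innerIdx_ne_lastIdx i).symm

@[simp] lemma innerIdx_inj {i j : Fin (2 * n)} : innerIdx i = innerIdx j ↔ i = j := by
  simp [innerIdx, Fin.ext_iff]

lemma tmat_eq : tmat n = single (firstIdx n) (lastIdx n) 1 := rfl

lemma Xmat_eq (i : Fin (2 * n)) : Xmat n M i =
    single (firstIdx n) (innerIdx i) 1 + ∑ l, M l i • single (innerIdx l) (lastIdx n) 1 := rfl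

@[simp] lemma tmat_mul_tmat : tmat n * tmat n = 0 := by
  simp [tmat_eq]

@[simp] lemma tmat_mul_Xmat (i : Fin (2 * n)) : tmat n * Xmat n M i = 0 := by
  simp [tmat_eq, Xmat_eq, mul_add, Finset.mul_sum]

@[simp] lemma Xmat_mul_tmat (i : Fin (2 * n)) : Xmat n M i * tmat n = 0 := by
  simp [tmat_eq, Xmat_eq, add_mul, Finset.sum_mul]

lemma Xmat_mul_Xmat (i j : Fin (2 * n)) : Xmat n M i * Xmat n M j = M i j • tmat n := by
  simp only [Xmat_eq, tmat_eq, smul_single, smul_eq_mul, mul_one, mul_add, add_mul,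
    Finset.sum_mul, Finset.mul_sum, ne_eq, not_false_eq_true, single_mul_single_of_ne,
    innerIdx_ne_firstIdx, lastIdx_ne_firstIdx, lastIdx_ne_innerIdx, Finset.sum_const_zero,
    add_zero, zero_add]
  rw [Finset.sum_eq_single i (fun l _ hl => by simp [Ne.symm hl]) (by simp)]
  simp

noncomputable def tautElem (M : Matrix (Fin (2 * n)) (Fin (2 * n)) ℂ) (a : ℂ)
    (c : Fin (2 * n) → ℂ) (d : ℂ) : Matrix (Fin (2 * n + 2)) (Fin (2 * n + 2)) ℂ :=
  a • 1 + ∑ i, c i • Xmat n M i + d • tmat n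

lemma tautElem_mul (a a' : ℂ) (c c' : Fin (2 * n) → ℂ) (d d' : ℂ) :
    tautElem M a c d * tautElem M a' c' d' =
      tautElem M (a * a') (a • c' + a' • c) (a * d' + a' * d + c ⬝ᵥ M *ᵥ c') := by
  rw [dotProduct_mulVec]
  simp only [tautElem, add_mul, mul_add, smul_mul_assoc, mul_smul_comm, one_mul, mul_one,
    Finset.sum_mul, Finset.mul_sum, tmat_mul_tmat, Xmat_mul_tmat, tmat_mul_Xmat, Xmat_mul_Xmat,
    smul_zero, Finset.sum_const_zero, add_zero, Pi.add_apply, Pi.smul_apply, add_smul,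
    Finset.sum_add_distrib, dotProduct, vecMul, Finset.sum_mul, Finset.sum_smul,
    smul_add, Finset.smul_sum, smul_smul, smul_eq_mul, mul_comm (c' _)]
  module

@[simp] lemma tautElem_apply_firstIdx_firstIdx (a : ℂ) (c : Fin (2 * n) → ℂ) (d : ℂ) :
    tautElem M a c d (firstIdx n) (firstIdx n) = a := by
  simp [tautElem, Xmat_eq, tmat_eq, Matrix.sum_apply]

@[simp] lemma tautElem_apply_firstIdx_innerIdx (a : ℂ) (c : Fin (2 * n) → ℂ) (d : ℂ)
    (k : Fin (2 * n)) : tautElem M a c d (firstIdx n) (innerIdx k) = c k := by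
  simp [tautElem, Xmat_eq, tmat_eq, Matrix.sum_apply, single_apply]

@[simp] lemma tautElem_apply_firstIdx_lastIdx (a : ℂ) (c : Fin (2 * n) → ℂ) (d : ℂ) :
    tautElem M a c d (firstIdx n) (lastIdx n) = d := by
  simp [tautElem, Xmat_eq, tmat_eq, Matrix.sum_apply]

lemma tmat_mem_tautAlg : tmat n ∈ tautAlg n M :=
  Algebra.subset_adjoin (Set.mem_insert _ _)

lemma Xmat_mem_tautAlg (i : Fin (2 * n)) : Xmat n M i ∈ tautAlg n M :=
  Algebra.subset_adjoin (Set.mem_insert_of_mem _ ⟨i, rfl⟩)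

lemma tautElem_mem_tautAlg (a : ℂ) (c : Fin (2 * n) → ℂ) (d : ℂ) : tautElem M a c d ∈ tautAlg n M :=
  add_mem (add_mem (Subalgebra.smul_mem _ (one_mem _) a)
    (sum_mem fun i _ => Subalgebra.smul_mem _ (Xmat_mem_tautAlg i) _))
    (Subalgebra.smul_mem _ tmat_mem_tautAlg d)

lemma mem_tautAlg_iff {x : Matrix (Fin (2 * n + 2)) (Fin (2 * n + 2)) ℂ} :
    x ∈ tautAlg n M ↔ ∃ a c d, x = tautElem M a c d := by
  refine ⟨fun hx => ?_, fun ⟨a, c, d, hx⟩ => hx ▸ tautElem_mem_tautAlg a c d⟩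
  induction hx using Algebra.adjoin_induction with
  | mem y hy =>
    rcases hy with rfl | ⟨i, rfl⟩
    · exact ⟨0, 0, 1, by simp [tautElem]⟩
    · exact ⟨0, Pi.single i 1, 0, by simp [tautElem, Pi.single_apply]⟩
  | algebraMap r => exact ⟨r, 0, 0, by simp [tautElem, Algebra.algebraMap_eq_smul_one]⟩
  | add x y _ _ hx hy =>
    obtain ⟨a, c, d, rfl⟩ := hx
    obtain ⟨a', c', d', rfl⟩ := hy
    refine ⟨a + a', c + c', d + d', ?_⟩
    simp only [tautElem, add_smul, Pi.add_apply, Finset.sum_add_distrib]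
    abel
  | mul x y _ _ hx hy =>
    obtain ⟨a, c, d, rfl⟩ := hx
    obtain ⟨a', c', d', rfl⟩ := hy
    exact ⟨_, _, _, tautElem_mul a a' c c' d d'⟩

variable (n M) in
noncomputable def coords : tautAlg n M →ₗ[ℂ] ℂ × (Fin (2 * n) → ℂ) × ℂ :=
  ((entryLinearMap ℂ ℂ (firstIdx n) (firstIdx n)).prod
    ((LinearMap.pi fun i => entryLinearMap ℂ ℂ (firstIdx n) (innerIdx i)).prod
      (entryLinearMap ℂ ℂ (firstIdx n) (lastIdx n)))) ∘ₗ (tautAlg n M).val.toLinearMap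

@[simp] lemma coords_apply (x : tautAlg n M) :
    coords n M x = ((x : Matrix (Fin (2 * n + 2)) (Fin (2 * n + 2)) ℂ) (firstIdx n) (firstIdx n),
      fun i => (x : Matrix (Fin (2 * n + 2)) (Fin (2 * n + 2)) ℂ) (firstIdx n) (innerIdx i),
      (x : Matrix (Fin (2 * n + 2)) (Fin (2 * n + 2)) ℂ) (firstIdx n) (lastIdx n)) := rfl

lemma coe_eq_tautElem_coords (x : tautAlg n M) :
    (x : Matrix (Fin (2 * n + 2)) (Fin (2 * n + 2)) ℂ) =
      tautElem M (coords n M x).1 (coords n M x).2.1 (coords n M x).2.2 := by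
  obtain ⟨a, c, d, hx⟩ := mem_tautAlg_iff.mp x.2
  simp [hx]

lemma coords_bijective : Function.Bijective (coords n M) := by
  refine ⟨fun x y hxy => Subtype.ext ?_, fun ⟨a, c, d⟩ => ⟨⟨_, tautElem_mem_tautAlg a c d⟩, ?_⟩⟩
  · rw [coe_eq_tautElem_coords x, coe_eq_tautElem_coords y, hxy]
  · simp

lemma finrank_tautAlg (n : ℕ) (M : Matrix (Fin (2 * n)) (Fin (2 * n)) ℂ) :
    Module.finrank ℂ (tautAlg n M) = 2 * n + 2 := by
  rw [(LinearEquiv.ofBijective (coords n M) coords_bijective).finrank_eq]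
  simp only [Module.finrank_prod, Module.finrank_self, Module.finrank_fintype_fun_eq_card,
    Fintype.card_fin]
  omega

variable (M) in
noncomputable def genX (i : Fin (2 * n)) : tautAlg n M := ⟨Xmat n M i, Xmat_mem_tautAlg i⟩

variable (n M) in
def genT : tautAlg n M := ⟨tmat n, tmat_mem_tautAlg⟩

lemma genX_mul_genX (i j : Fin (2 * n)) : genX M i * genX M j = M i j • genT n M :=
  Subtype.ext (Xmat_mul_Xmat i j)

lemma genT_mul_genX (i : Fin (2 * n)) : genT n M * genX M i = 0 :=
  Subtype.ext (tmat_mul_Xmat i)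

lemma isNilpotent_genX (i : Fin (2 * n)) : IsNilpotent (genX M i) :=
  ⟨3, by rw [pow_succ, sq, genX_mul_genX, smul_mul_assoc, genT_mul_genX, smul_zero]⟩

lemma genX_mul_sub_mul_genX (p q : Fin (2 * n)) :
    genX M p * genX M q - genX M q * genX M p = (M p q - M q p) • genT n M := by
  rw [genX_mul_genX, genX_mul_genX, sub_smul]

lemma genT_ne_zero : genT n M ≠ 0 := fun h => by
  simpa [genT, tmat_eq] using congrArg (fun x => (coords n M x).2.2) h

variable (n M) in
noncomputable def augmentation : tautAlg n M →ₐ[ℂ] ℂ :=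
  AlgHom.ofLinearMap (LinearMap.fst ℂ ℂ _ ∘ₗ coords n M) (by simp) fun x y => by
    simp only [LinearMap.comp_apply, LinearMap.fst_apply, coords_apply]
    rw [Subalgebra.coe_mul, coe_eq_tautElem_coords x, coe_eq_tautElem_coords y, tautElem_mul]
    simp

lemma augmentation_apply (x : tautAlg n M) : augmentation n M x = (coords n M x).1 := rfl

lemma mul_eq_smul_genT {x y : tautAlg n M} (hx : augmentation n M x = 0)
    (hy : augmentation n M y = 0) :
    x * y = ((coords n M x).2.1 ⬝ᵥ M *ᵥ (coords n M y).2.1) • genT n M := by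
  rw [augmentation_apply] at hx hy
  apply Subtype.ext
  rw [Subalgebra.coe_mul, coe_eq_tautElem_coords x, coe_eq_tautElem_coords y, tautElem_mul, hx, hy]
  simp [tautElem, genT]

theorem exists_mul_mul_transpose_eq_smul_of_algEquiv {M₁ M₂ : Matrix (Fin (2 * n)) (Fin (2 * n)) ℂ}
    (hM₁ : M₁ᵀ ≠ M₁) (φ : tautAlg n M₁ ≃ₐ[ℂ] tautAlg n M₂) :
    ∃ (C : Matrix (Fin (2 * n)) (Fin (2 * n)) ℂ) (μ : ℂ), μ ≠ 0 ∧ C * M₂ * Cᵀ = μ • M₁ := by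
  set C : Matrix (Fin (2 * n)) (Fin (2 * n)) ℂ := of fun p => (coords n M₂ (φ (genX M₁ p))).2.1
  have hnil : ∀ p, augmentation n M₂ (φ (genX M₁ p)) = 0 := fun p =>
    (((isNilpotent_genX p).map φ).map (augmentation n M₂)).eq_zero
  have hY : ∀ p q, φ (genX M₁ p) * φ (genX M₁ q) = (C * M₂ * Cᵀ) p q • genT n M₂ := by
    intro p q
    rw [mul_eq_smul_genT (hnil p) (hnil q), mul_mul_apply]
    rfl
  obtain ⟨q, hq⟩ := Function.ne_iff.mp hM₁
  obtain ⟨p, hpq⟩ := Function.ne_iff.mp hq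
  have hκ : M₁ p q - M₁ q p ≠ 0 := sub_ne_zero.mpr hpq
  set μ := ((C * M₂ * Cᵀ) p q - (C * M₂ * Cᵀ) q p) / (M₁ p q - M₁ q p) with hμ_def
  have hφt : φ (genT n M₁) = μ • genT n M₂ := by
    have h := congrArg φ (genX_mul_sub_mul_genX (M := M₁) p q)
    rw [map_sub, map_mul, map_mul, hY, hY, ← sub_smul, map_smul] at h
    rw [hμ_def, div_eq_inv_mul, mul_smul, h, inv_smul_smul₀ hκ]
  have hμ : μ ≠ 0 := by
    intro h
    apply genT_ne_zero (M := M₁)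
    apply φ.injective
    rw [hφt, h, zero_smul, map_zero]
  refine ⟨C, μ, hμ, ext fun i j => ?_⟩
  have h := congrArg φ (genX_mul_genX (M := M₁) i j)
  rw [map_mul, hY, map_smul, hφt, smul_smul] at h
  rw [Matrix.smul_apply, smul_eq_mul, mul_comm μ]
  exact smul_left_injective ℂ genT_ne_zero h

theorem det_eq_of_algEquiv (hn : 0 < n) {M₁ M₂ : Matrix (Fin (2 * n)) (Fin (2 * n)) ℂ}
    (h₁ : M₁ - M₁ᵀ = stdOmega n) (h₂ : M₂ - M₂ᵀ = stdOmega n)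
    (φ : tautAlg n M₁ ≃ₐ[ℂ] tautAlg n M₂) : M₁.det = M₂.det := by
  have hM₁ : M₁ᵀ ≠ M₁ := fun h => stdOmega_ne_zero hn (by rw [← h₁, h, sub_self])
  obtain ⟨C, μ, hμ, hC⟩ := exists_mul_mul_transpose_eq_smul_of_algEquiv hM₁ φ
  exact det_eq_of_mul_mul_transpose_eq_smul hμ (det_stdOmega_ne_zero n) h₁ h₂ hC

variable (n) in
def stdOmegaUpper : Matrix (Fin (2 * n)) (Fin (2 * n)) ℂ :=
  of fun i j => if (i : ℕ) + n = j then 1 else 0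

lemma stdOmegaUpper_sub_transpose : stdOmegaUpper n - (stdOmegaUpper n)ᵀ = stdOmega n := by
  ext i j
  simp only [stdOmegaUpper, stdOmega, Matrix.sub_apply, transpose_apply, of_apply]
  split_ifs <;> first | omega | simp

variable (n) in
def structMat (j : ℕ) : Matrix (Fin (2 * n)) (Fin (2 * n)) ℂ :=
  stdOmegaUpper n + diagonal fun i : Fin (2 * n) => if (i : ℕ) = 0 then (j : ℂ) else 1

lemma structMat_sub_transpose (j : ℕ) : structMat n j - (structMat n j)ᵀ = stdOmega n := by
  rw [structMat, transpose_add, diagonal_transpose, add_sub_add_right_eq_sub,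
    stdOmegaUpper_sub_transpose]

lemma det_structMat (hn : 0 < n) (j : ℕ) : (structMat n j).det = j := by
  have hU : (structMat n j).IsUpperTriangular := by
    refine BlockTriangular.add (fun i k hki => ?_) (blockTriangular_diagonal _)
    simp only [stdOmegaUpper, of_apply, ite_eq_right_iff]
    intro h
    exact absurd hki (by rw [id, id, Fin.lt_def]; omega)
  rw [det_of_isUpperTriangular hU, Finset.prod_eq_single ⟨0, by omega⟩]
  · simp [structMat, stdOmegaUpper, hn.ne']
  · intro i _ hi
    simp [structMat, stdOmegaUpper, hn.ne', Fin.ext_iff.not.mp hi]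
  · simp

end TautologicalAlgebra

open TautologicalAlgebra

/-- For every `n ≥ 1` there are infinitely many pairwise
non-isomorphic tautological algebras of dimension `2n+2`: there is a sequence of
structure matrices `M_j` with `M_j - M_jᵗ = Ω` whose associated algebras all
have dimension `2n+2` and are pairwise non-isomorphic. -/
theorem infinitely_many_tautological_algebras (n : ℕ) (hn : 1 ≤ n) :
    ∃ F : ℕ → Matrix (Fin (2 * n)) (Fin (2 * n)) ℂ,
      (∀ j : ℕ, F j - (F j)ᵀ = stdOmega n) ∧
      (∀ j : ℕ, Module.finrank ℂ ↥(tautAlg n (F j)) = 2 * n + 2) ∧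
      (∀ j₁ j₂ : ℕ, j₁ ≠ j₂ → IsEmpty (↥(tautAlg n (F j₁)) ≃ₐ[ℂ] ↥(tautAlg n (F j₂)))) := by
  refine ⟨structMat n, structMat_sub_transpose, fun j => finrank_tautAlg n _,
    fun j₁ j₂ hne => ⟨fun φ => hne ?_⟩⟩
  have h := det_eq_of_algEquiv hn (structMat_sub_transpose j₁) (structMat_sub_transpose j₂) φ
  rwa [det_structMat hn, det_structMat hn, Nat.cast_inj] at h
end
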